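/- Let N ≥ 3, R > 0, and let v be a function that is C² on the open upper half ball B_R⁺ ⊂ ℝ^N and C¹ up to the boundary away from the origin, satisfying: (i) −Δv ≥ 0 in B_R⁺; (ii) ∂v/∂y_N < 0 on (∂B_R⁺ ∩ ∂ℝ₊^N) \ {0}; (iii) v > 0 on closure(B_R⁺) \ {0}. Then v(y) ≥ min_{∂B_R ∩ closure(ℝ₊^N)} v for all y ∈ closure(B_R⁺) \ {0}. -/

import Mathlib

/-!
Compare `v` with `w = v + d φ`, where `φ(y) = ‖y‖^(2-N) - ‖y‖²` minus its value on `‖y‖ = R`.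
Since `‖y‖^(2-N)` is harmonic, `Δw = Δv - 2Nd < 0`, so `w` has no interior local minimum; on the
flat boundary `∂_N w = ∂_N v < 0`, so no minimum there either. As `‖y‖^(2-N) → ∞` at the origin
(`N ≥ 3`), `w` exceeds the minimum `m` of `v` over the cap on a small inner half sphere. Hence the
minimum of `w` over the half shell between the two spheres, attained on one of them, is at least
`m`, and letting `d → 0` gives `v ≥ m`.
-/

open Real Filter
open scoped BigOperators RealInnerProductSpace

noncomputable section

abbrev E (N : ℕ) := EuclideanSpace ℝ (Fin N)

def lastIdx (N : ℕ) (h : 0 < N) : Fin N := ⟨N - 1, Nat.sub_lt h Nat.one_pos⟩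

def pd {N : ℕ} (u : E N → ℝ) (i : Fin N) (y : E N) : ℝ :=
  fderiv ℝ u y (EuclideanSpace.single i 1)

def lap {N : ℕ} (u : E N → ℝ) (y : E N) : ℝ := ∑ i, pd (pd u i) i y

open Topology

variable {N : ℕ}

/-- `fderiv` is `0` where the function is not differentiable. -/
lemma differentiableAt_of_pd_ne_zero {u : E N → ℝ} {x : E N} {i : Fin N} (h : pd u i x ≠ 0) :
    DifferentiableAt ℝ u x := by
  by_contra hu
  exact h (by simp [pd, fderiv_zero_of_not_differentiableAt hu])

lemma ContDiffAt.differentiableAt_pd {u : E N → ℝ} {x : E N} (hu : ContDiffAt ℝ 2 u x)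
    (i : Fin N) : DifferentiableAt ℝ (pd u i) x :=
  ((hu.fderiv_right (m := 1) (by norm_num)).differentiableAt one_ne_zero).clm_apply
    (differentiableAt_const _)

lemma hasDerivAt_apply_add_smul_single {u : E N → ℝ} {x : E N} {i : Fin N} {t : ℝ}
    (hu : DifferentiableAt ℝ u (x + t • EuclideanSpace.single i 1)) :
    HasDerivAt (fun s : ℝ => u (x + s • EuclideanSpace.single i 1))
      (pd u i (x + t • EuclideanSpace.single i 1)) t := by
  have hline : HasDerivAt (fun s : ℝ => x + s • EuclideanSpace.single i 1)
      (EuclideanSpace.single i 1) t := by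
    simpa using ((hasDerivAt_id t).smul_const (EuclideanSpace.single i (1 : ℝ))).const_add x
  exact hu.hasFDerivAt.comp_hasDerivAt t hline

/-- If `g'' t < 0`, then `t` is also a local maximum, so `g` is locally constant. -/
lemma IsLocalMin.deriv_deriv_nonneg {g : ℝ → ℝ} {t : ℝ} (h : IsLocalMin g t)
    (hg : ContinuousAt g t) : 0 ≤ deriv (deriv g) t := by
  by_contra! hneg
  have hmax : IsLocalMax g t := isLocalMax_of_deriv_deriv_neg hneg h.deriv_eq_zero hg
  have hconst : g =ᶠ[𝓝 t] fun _ => g t := by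
    filter_upwards [h, hmax] with s hmin hmax using le_antisymm hmax hmin
  rw [hconst.deriv.deriv_eq] at hneg
  simp at hneg

lemma IsLocalMin.pd_pd_nonneg {u : E N → ℝ} {x : E N} (h : IsLocalMin u x)
    (hu : ContDiffAt ℝ 2 u x) (i : Fin N) : 0 ≤ pd (pd u i) i x := by
  set e := EuclideanSpace.single i (1 : ℝ)
  have hline : Tendsto (fun s : ℝ => x + s • e) (𝓝 0) (𝓝 x) := by
    have : Continuous (fun s : ℝ => x + s • e) := by fun_prop
    simpa using this.tendsto 0
  have hmin : IsLocalMin (fun s : ℝ => u (x + s • e)) 0 := by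
    filter_upwards [hline.eventually h] with s hs
    simpa using hs
  have hderiv : deriv (fun s : ℝ => u (x + s • e)) =ᶠ[𝓝 0] fun s => pd u i (x + s • e) := by
    filter_upwards [hline.eventually (hu.eventually (by simp))] with s hs
    exact (hasDerivAt_apply_add_smul_single (hs.differentiableAt (by norm_num))).deriv
  have hsecond : deriv (fun s : ℝ => pd u i (x + s • e)) 0 = pd (pd u i) i x := by
    simpa using (hasDerivAt_apply_add_smul_single (t := 0)
      (by simpa using hu.differentiableAt_pd i)).deriv
  have := hmin.deriv_deriv_nonneg
    (by simpa [ContinuousAt, Function.comp_def] using hu.continuousAt.tendsto.comp hline)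
  rwa [hderiv.deriv_eq, hsecond] at this

lemma IsLocalMin.lap_nonneg {u : E N → ℝ} {x : E N} (h : IsLocalMin u x)
    (hu : ContDiffAt ℝ 2 u x) : 0 ≤ lap u x :=
  Finset.sum_nonneg fun i _ => h.pd_pd_nonneg hu i

lemma pd_add {u w : E N → ℝ} {x : E N} (hu : DifferentiableAt ℝ u x)
    (hw : DifferentiableAt ℝ w x) (i : Fin N) : pd (u + w) i x = pd u i x + pd w i x := by
  simp [pd, fderiv_add hu hw]

lemma lap_add {u w : E N → ℝ} {x : E N} (hu : ContDiffAt ℝ 2 u x) (hw : ContDiffAt ℝ 2 w x) :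
    lap (u + w) x = lap u x + lap w x := by
  rw [lap, lap, lap, ← Finset.sum_add_distrib]
  refine Finset.sum_congr rfl fun i _ => ?_
  have hpd : pd (u + w) i =ᶠ[𝓝 x] pd u i + pd w i := by
    filter_upwards [hu.eventually (by simp), hw.eventually (by simp)] with y hu' hw'
    exact pd_add (hu'.differentiableAt (by norm_num)) (hw'.differentiableAt (by norm_num)) i
  rw [pd, hpd.fderiv_eq, fderiv_add (hu.differentiableAt_pd i) (hw.differentiableAt_pd i)]
  rfl

lemma hasFDerivAt_comp_normSq {φ : ℝ → ℝ} {a : ℝ} {x : E N}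
    (hφ : HasDerivAt φ a (‖x‖ ^ 2)) :
    HasFDerivAt (fun y : E N => φ (‖y‖ ^ 2)) (a • (2 • innerSL ℝ x)) x :=
  hφ.comp_hasFDerivAt x (hasStrictFDerivAt_norm_sq x).hasFDerivAt

lemma pd_comp_normSq {φ : ℝ → ℝ} {a : ℝ} {x : E N} (hφ : HasDerivAt φ a (‖x‖ ^ 2))
    (i : Fin N) : pd (fun y => φ (‖y‖ ^ 2)) i x = a * (2 * x i) := by
  simp [pd, (hasFDerivAt_comp_normSq hφ).fderiv, EuclideanSpace.inner_single_right]

lemma lap_comp_normSq {φ φ' : ℝ → ℝ} {φ'' : ℝ} {x : E N}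
    (hφ : ∀ᶠ s in 𝓝 (‖x‖ ^ 2), HasDerivAt φ (φ' s) s) (hφ' : HasDerivAt φ' φ'' (‖x‖ ^ 2)) :
    lap (fun y => φ (‖y‖ ^ 2)) x = 2 * N * φ' (‖x‖ ^ 2) + 4 * ‖x‖ ^ 2 * φ'' := by
  have hnear : ∀ᶠ y in 𝓝 x, HasDerivAt φ (φ' (‖y‖ ^ 2)) (‖y‖ ^ 2) :=
    ((continuous_norm.pow 2).tendsto x).eventually hφ
  have hterm (i : Fin N) :
      pd (pd (fun y => φ (‖y‖ ^ 2)) i) i x = 2 * φ' (‖x‖ ^ 2) + 4 * φ'' * x i ^ 2 := by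
    have hpd : pd (fun y => φ (‖y‖ ^ 2)) i =ᶠ[𝓝 x] fun y => φ' (‖y‖ ^ 2) * (2 * y i) := by
      filter_upwards [hnear] with y hy using pd_comp_normSq hy i
    have hcoord : HasFDerivAt (fun y : E N => 2 * y i)
        ((2 : ℝ) • EuclideanSpace.proj (𝕜 := ℝ) i) x :=
      (EuclideanSpace.proj (𝕜 := ℝ) i).hasFDerivAt.const_mul 2
    rw [pd, hpd.fderiv_eq, ((hasFDerivAt_comp_normSq hφ').fun_mul hcoord).fderiv]
    simp [EuclideanSpace.inner_single_right]
    ring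
  have hsum : ∑ i, 4 * φ'' * x i ^ 2 = 4 * ‖x‖ ^ 2 * φ'' := by
    rw [← Finset.mul_sum, EuclideanSpace.real_norm_sq_eq]
    ring
  rw [lap, Finset.sum_congr rfl fun i _ => hterm i, Finset.sum_add_distrib, hsum]
  simp
  ring

lemma IsLocalMinOn.pd_nonneg {u : E N → ℝ} {S : Set (E N)} {x : E N} {i : Fin N}
    (h : IsLocalMinOn u S x) (hu : DifferentiableAt ℝ u x)
    (hS : ∃ᶠ t : ℝ in 𝓝[>] 0, x + t • EuclideanSpace.single i 1 ∈ S) : 0 ≤ pd u i x :=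
  h.hasFDerivWithinAt_nonneg hu.hasFDerivAt.hasFDerivWithinAt
    (mem_posTangentConeAt_of_frequently_mem hS)

/-- The profile of `φ` in the variable `s = ‖y‖²`. -/
def barrierProfile (N : ℕ) (R s : ℝ) : ℝ :=
  s ^ ((2 - N : ℝ) / 2) - s - ((R ^ 2) ^ ((2 - N : ℝ) / 2) - R ^ 2)

lemma barrierProfile_sq_self (N : ℕ) (R : ℝ) : barrierProfile N R (R ^ 2) = 0 := by
  simp [barrierProfile]

lemma hasDerivAt_barrierProfile (R : ℝ) {s : ℝ} (hs : 0 < s) :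
    HasDerivAt (barrierProfile N R) ((2 - N : ℝ) / 2 * s ^ ((2 - N : ℝ) / 2 - 1) - 1) s :=
  (((Real.hasDerivAt_rpow_const (Or.inl hs.ne')).sub (hasDerivAt_id s)).sub_const _)

lemma contDiffAt_barrierProfile (R : ℝ) {s : ℝ} (hs : s ≠ 0) :
    ContDiffAt ℝ 2 (barrierProfile N R) s :=
  ((Real.contDiffAt_rpow_const_of_ne hs).sub contDiffAt_id).sub contDiffAt_const

lemma contDiffAt_mul_barrier (R d : ℝ) {x : E N} (hx : x ≠ 0) :
    ContDiffAt ℝ 2 (fun y : E N => d * barrierProfile N R (‖y‖ ^ 2)) x :=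
  contDiffAt_const.mul ((contDiffAt_barrierProfile R (by positivity)).comp x
    (contDiff_norm_sq ℝ).contDiffAt)

lemma pd_mul_barrier (R d : ℝ) {x : E N} (hx : x ≠ 0) (i : Fin N) :
    pd (fun y : E N => d * barrierProfile N R (‖y‖ ^ 2)) i x
      = d * ((2 - N : ℝ) / 2 * (‖x‖ ^ 2) ^ ((2 - N : ℝ) / 2 - 1) - 1) * (2 * x i) :=
  pd_comp_normSq ((hasDerivAt_barrierProfile R (by positivity)).const_mul d) i

lemma lap_mul_barrier (R d : ℝ) {x : E N} (hx : x ≠ 0) :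
    lap (fun y : E N => d * barrierProfile N R (‖y‖ ^ 2)) x = -(2 * N * d) := by
  set p : ℝ := (2 - N : ℝ) / 2
  have hq : 0 < ‖x‖ ^ 2 := by positivity
  have hφ : ∀ᶠ s in 𝓝 (‖x‖ ^ 2),
      HasDerivAt (fun s => d * barrierProfile N R s) (d * (p * s ^ (p - 1) - 1)) s := by
    filter_upwards [lt_mem_nhds hq] with s hs using (hasDerivAt_barrierProfile R hs).const_mul d
  have hφ' : HasDerivAt (fun s => d * (p * s ^ (p - 1) - 1))
      (d * (p * ((p - 1) * (‖x‖ ^ 2) ^ (p - 1 - 1)))) (‖x‖ ^ 2) :=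
    (((Real.hasDerivAt_rpow_const (Or.inl hq.ne')).const_mul p).sub_const 1).const_mul d
  rw [lap_comp_normSq hφ hφ', Real.rpow_sub_one hq.ne' (p - 1)]
  field_simp
  ring

def halfShell (i : Fin N) (s R : ℝ) : Set (E N) := {z | s ≤ ‖z‖ ^ 2 ∧ ‖z‖ ≤ R ∧ 0 ≤ z i}

lemma eventually_add_smul_single_mem_halfShell {i : Fin N} {s R : ℝ} {x : E N}
    (hsx : s < ‖x‖ ^ 2) (hxR : ‖x‖ < R) (hxi : 0 ≤ x i) :
    ∀ᶠ t : ℝ in 𝓝[>] 0, x + t • EuclideanSpace.single i 1 ∈ halfShell i s R := by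
  have hnorm : Tendsto (fun t : ℝ => ‖x + t • EuclideanSpace.single i 1‖) (𝓝 0) (𝓝 ‖x‖) := by
    have : Continuous fun t : ℝ => ‖x + t • EuclideanSpace.single i 1‖ := by fun_prop
    simpa using this.tendsto 0
  filter_upwards [nhdsWithin_le_nhds (hnorm.eventually (gt_mem_nhds hxR)),
    nhdsWithin_le_nhds ((hnorm.pow 2).eventually (lt_mem_nhds hsx)),
    self_mem_nhdsWithin] with t htR hts (ht : 0 < t)
  refine ⟨hts.le, htR.le, ?_⟩
  simpa using add_nonneg hxi ht.le

lemma IsMinOn.mem_sphere_of_add_mul_barrier {R s d : ℝ} {v : E N → ℝ} {i : Fin N} {x : E N}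
    (hreg2 : ContDiffOn ℝ 2 v {y | ‖y‖ < R ∧ 0 < y i})
    (hsuper : ∀ y : E N, ‖y‖ < R → 0 < y i → lap v y ≤ 0)
    (hbdry : ∀ y : E N, y ≠ 0 → ‖y‖ < R → y i = 0 → pd v i y < 0)
    (hs : 0 ≤ s) (hd : 0 < d)
    (hmin : IsMinOn (v + fun z => d * barrierProfile N R (‖z‖ ^ 2)) (halfShell i s R) x)
    (hx : x ∈ halfShell i s R) :
    ‖x‖ ^ 2 = s ∨ ‖x‖ = R := by
  by_contra! hne
  have hsx : s < ‖x‖ ^ 2 := lt_of_le_of_ne hx.1 hne.1.symm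
  have hxR : ‖x‖ < R := lt_of_le_of_ne hx.2.1 hne.2
  have hx0 : x ≠ 0 := by
    rintro rfl
    simp at hsx
    linarith
  have hbar := contDiffAt_mul_barrier R d hx0
  rcases hx.2.2.eq_or_lt with hxi | hxi
  · have hv := hbdry x hx0 hxR hxi.symm
    have hvd : DifferentiableAt ℝ v x := differentiableAt_of_pd_ne_zero hv.ne
    have hpd := pd_add hvd (hbar.differentiableAt (by norm_num)) i
    rw [pd_mul_barrier R d hx0, ← hxi] at hpd
    have := hmin.localize.pd_nonneg (hvd.add (hbar.differentiableAt (by norm_num)))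
      (eventually_add_smul_single_mem_halfShell hsx hxR hx.2.2).frequently
    linarith
  · have hU : {z : E N | s < ‖z‖ ^ 2 ∧ ‖z‖ < R ∧ 0 < z i} ∈ 𝓝 x :=
      ((isOpen_lt continuous_const (continuous_norm.pow 2)).inter
        ((isOpen_lt continuous_norm continuous_const).inter
          (isOpen_lt continuous_const (EuclideanSpace.proj (𝕜 := ℝ) i).continuous))).mem_nhds
        ⟨hsx, hxR, hxi⟩
    have hv2 : ContDiffAt ℝ 2 v x := hreg2.contDiffAt (mem_of_superset hU fun z hz => hz.2)
    have hloc := hmin.isLocalMin (mem_of_superset hU fun z hz => ⟨hz.1.le, hz.2.1.le, hz.2.2.le⟩)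
    have := hloc.lap_nonneg (hv2.add hbar)
    rw [lap_add hv2 hbar, lap_mul_barrier R d hx0] at this
    have hN : (0 : ℝ) < N := by exact_mod_cast i.pos
    nlinarith [hsuper x hxR hxi]

lemma exists_le_mul_rpow_sub {p : ℝ} (hp : p < 0) {d : ℝ} (hd : 0 < d) (c m : ℝ) {r : ℝ}
    (hr : 0 < r) : ∃ s, m ≤ d * (s ^ p - c) ∧ s ≤ r ∧ 0 < s := by
  have hlim : Tendsto (fun s : ℝ => d * (s ^ p - c)) (𝓝[>] 0) atTop :=
    (tendsto_atTop_add_const_right _ _ (tendsto_rpow_neg_nhdsGT_zero hp)).const_mul_atTop hd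
  obtain ⟨s, hm, hsr, hs⟩ := ((hlim.eventually_ge_atTop m).and
    (((gt_mem_nhds hr).filter_mono nhdsWithin_le_nhds).and self_mem_nhdsWithin)).exists
  exact ⟨s, hm, le_of_lt hsr, hs⟩

lemma isCompact_halfShell (i : Fin N) (s R : ℝ) : IsCompact (halfShell i s R) := by
  refine Metric.isCompact_of_isClosed_isBounded ?_
    ((Metric.isBounded_closedBall (x := 0) (r := R)).subset fun z hz => by simpa using hz.2.1)
  exact (isClosed_le continuous_const (continuous_norm.pow 2)).inter
    ((isClosed_le continuous_norm continuous_const).inter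
      (isClosed_le continuous_const (EuclideanSpace.proj (𝕜 := ℝ) i).continuous))

lemma sInf_le_add_mul_barrier (hN : 3 ≤ N) {R d : ℝ} {v : E N → ℝ} {i : Fin N}
    (hreg2 : ContDiffOn ℝ 2 v {y | ‖y‖ < R ∧ 0 < y i})
    (hcont : ContinuousOn v ({y | ‖y‖ ≤ R ∧ 0 ≤ y i} \ {0}))
    (hsuper : ∀ y : E N, ‖y‖ < R → 0 < y i → lap v y ≤ 0)
    (hbdry : ∀ y : E N, y ≠ 0 → ‖y‖ < R → y i = 0 → pd v i y < 0)
    (hpos : ∀ y : E N, y ≠ 0 → ‖y‖ ≤ R → 0 ≤ y i → 0 < v y)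
    {y : E N} (hy0 : y ≠ 0) (hyR : ‖y‖ ≤ R) (hyi : 0 ≤ y i) (hd : 0 < d) :
    sInf (v '' {z | ‖z‖ = R ∧ 0 ≤ z i}) ≤ v y + d * barrierProfile N R (‖y‖ ^ 2) := by
  set m := sInf (v '' {z : E N | ‖z‖ = R ∧ 0 ≤ z i})
  have hR : 0 < R := (norm_pos_iff.mpr hy0).trans_le hyR
  have hp : (2 - N : ℝ) / 2 < 0 := by
    have : (3 : ℝ) ≤ N := by exact_mod_cast hN
    linarith
  obtain ⟨s, hsm, hsy, hs0⟩ := exists_le_mul_rpow_sub hp hd ((R ^ 2) ^ ((2 - N : ℝ) / 2)) m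
    (by positivity : 0 < ‖y‖ ^ 2)
  have hsR : s ≤ R ^ 2 := hsy.trans (by gcongr)
  have hK0 : ∀ z ∈ halfShell i s R, z ≠ 0 := by
    rintro z hz rfl
    simp [halfShell] at hz
    linarith [hz.1]
  have hwcont : ContinuousOn (v + fun z => d * barrierProfile N R (‖z‖ ^ 2)) (halfShell i s R) :=
    (hcont.mono fun z hz => ⟨⟨hz.2.1, hz.2.2⟩, hK0 z hz⟩).add fun z hz =>
      (contDiffAt_mul_barrier R d (hK0 z hz)).continuousAt.continuousWithinAt
  have hyK : y ∈ halfShell i s R := ⟨hsy, hyR, hyi⟩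
  obtain ⟨x, hxK, hxmin⟩ := (isCompact_halfShell i s R).exists_isMinOn ⟨y, hyK⟩ hwcont
  refine le_trans ?_ (hxmin hyK)
  rcases hxmin.mem_sphere_of_add_mul_barrier hreg2 hsuper hbdry hs0.le hd hxK with hxs | hxR
  · have hvx := hpos x (hK0 x hxK) hxK.2.1 hxK.2.2
    have : d * (s ^ ((2 - N : ℝ) / 2) - (R ^ 2) ^ ((2 - N : ℝ) / 2))
        ≤ d * barrierProfile N R (‖x‖ ^ 2) := by
      rw [hxs, barrierProfile]
      exact mul_le_mul_of_nonneg_left (by linarith) hd.le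
    simp only [Pi.add_apply]
    linarith
  · have hbdd : BddBelow (v '' {z : E N | ‖z‖ = R ∧ 0 ≤ z i}) := by
      refine ⟨0, ?_⟩
      rintro _ ⟨z, hz, rfl⟩
      exact (hpos z (by rintro rfl; simp at hz; linarith) hz.1.le hz.2).le
    have := csInf_le hbdd ⟨x, ⟨hxR, hxK.2.2⟩, rfl⟩
    simp [hxR, barrierProfile_sq_self]
    exact this

/-- a boundary maximum principle on the upper half ball: if `-Δv ≥ 0` inside,
`∂v/∂y_N < 0` on the flat boundary part away from the origin, and `v > 0` away from the
origin, then `v` is bounded below by its minimum over the spherical boundary cap. -/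
theorem stmt1 (N : ℕ) (hN : 3 ≤ N) (R : ℝ) (v : E N → ℝ)
    (hreg2 : ContDiffOn ℝ 2 v {y : E N | ‖y‖ < R ∧ 0 < y (lastIdx N (by omega))})
    (hreg1 : ContDiffOn ℝ 1 v
      ({y : E N | ‖y‖ ≤ R ∧ 0 ≤ y (lastIdx N (by omega))} \ {0}))
    (hsuper : ∀ y : E N, ‖y‖ < R → 0 < y (lastIdx N (by omega)) → lap v y ≤ 0)
    (hbdry : ∀ y : E N, y ≠ 0 → ‖y‖ < R → y (lastIdx N (by omega)) = 0 →
      pd v (lastIdx N (by omega)) y < 0)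
    (hpos : ∀ y : E N, y ≠ 0 → ‖y‖ ≤ R → 0 ≤ y (lastIdx N (by omega)) → 0 < v y) :
    ∀ y : E N, y ≠ 0 → ‖y‖ ≤ R → 0 ≤ y (lastIdx N (by omega)) →
      sInf (v '' {z : E N | ‖z‖ = R ∧ 0 ≤ z (lastIdx N (by omega))}) ≤ v y := by
  intro y hy0 hyR hyN
  have hlim : Tendsto (fun d : ℝ => v y + d * barrierProfile N R (‖y‖ ^ 2)) (𝓝[>] 0)
      (𝓝 (v y)) := by
    have : Continuous fun d : ℝ => v y + d * barrierProfile N R (‖y‖ ^ 2) := by fun_prop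
    simpa using (this.tendsto 0).mono_left nhdsWithin_le_nhds
  exact ge_of_tendsto hlim (eventually_nhdsWithin_of_forall fun d hd =>
    sInf_le_add_mul_barrier hN hreg2 hreg1.continuousOn hsuper hbdry hpos hy0 hyR hyN hd)
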